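/- For every integer n≥1 there exists a constant C(n)>0, depending only on n, s and f (in particular independent of β and m), such that for every β∈(0,1], every integer m≥n, and every u∈E^{+n}, one has J_β(u) ≤ C(n). -/

import Mathlib

open MeasureTheory

noncomputable section

/-- The space-time domain `Q = (0,π) × (0,2π)`. -/
def Qset : Set (ℝ × ℝ) := Set.Ioo 0 Real.pi ×ˢ Set.Ioo 0 (2 * Real.pi)

/-- Basis function `sin(jx)·cos(kt)`. -/
def phiA (j k : ℕ) : ℝ × ℝ → ℝ := fun p => Real.sin (j * p.1) * Real.cos (k * p.2)

/-- Basis function `sin(jx)·sin(kt)`. -/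
def phiB (j k : ℕ) : ℝ × ℝ → ℝ := fun p => Real.sin (j * p.1) * Real.sin (k * p.2)

/-- The (normalized) Fourier coefficient of `u` against `sin(jx)cos(kt)`. -/
def coefA (j k : ℕ) (u : ℝ × ℝ → ℝ) : ℝ :=
  ((if k = 0 then 1 else 2) / Real.pi ^ 2) * ∫ p in Qset, u p * phiA j k p

/-- The (normalized) Fourier coefficient of `u` against `sin(jx)sin(kt)`. -/
def coefB (j k : ℕ) (u : ℝ × ℝ → ℝ) : ℝ :=
  (2 / Real.pi ^ 2) * ∫ p in Qset, u p * phiB j k p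

/-- `‖w⁺‖_E²`, the square of the `E`-norm of the `E⁺` (i.e. `k > j`) component of `u`. -/
def normPlusSq (u : ℝ × ℝ → ℝ) : ℝ :=
  Real.pi ^ 2 * ∑' jk : ℕ × ℕ,
    if jk.1 < jk.2 then
      |((jk.2 : ℝ) ^ 2 - (jk.1 : ℝ) ^ 2)| * ((coefA jk.1 jk.2 u) ^ 2 + (coefB jk.1 jk.2 u) ^ 2)
    else 0

/-- `‖w⁻‖_E²`, the square of the `E`-norm of the `E⁻` (i.e. `k < j`) component of `u`. -/
def normMinusSq (u : ℝ × ℝ → ℝ) : ℝ :=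
  Real.pi ^ 2 * ∑' jk : ℕ × ℕ,
    if jk.2 < jk.1 then
      |((jk.2 : ℝ) ^ 2 - (jk.1 : ℝ) ^ 2)| * ((coefA jk.1 jk.2 u) ^ 2 + (coefB jk.1 jk.2 u) ^ 2)
    else 0

/-- `‖w‖_E²`, the square of the full `E`-norm (over all `k ≠ j`). -/
def normESq (u : ℝ × ℝ → ℝ) : ℝ := normPlusSq u + normMinusSq u

/-- `‖v_t‖²_{L²(Q)}`, where `v` is the kernel (`k = j`) component of `u`. -/
def vtNormSq (u : ℝ × ℝ → ℝ) : ℝ :=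
  (Real.pi ^ 2 / 2) * ∑' j : ℕ, (j : ℝ) ^ 2 * ((coefA j j u) ^ 2 + (coefB j j u) ^ 2)

/-- `‖u‖_{β,E}² = ‖w⁺‖_E² + ‖w⁻‖_E² + β‖v_t‖²_{L²}`. -/
def normBetaSq (β : ℝ) (u : ℝ × ℝ → ℝ) : ℝ := normPlusSq u + normMinusSq u + β * vtNormSq u

/-- `‖u‖_{β,E}`. -/
def normBeta (β : ℝ) (u : ℝ × ℝ → ℝ) : ℝ := Real.sqrt (normBetaSq β u)

/-- `∫_Q |u|^r dx dt`. -/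
def intPow (r : ℝ) (u : ℝ × ℝ → ℝ) : ℝ := ∫ p in Qset, |u p| ^ r

/-- `∫_Q f·u dx dt`. -/
def intFU (f u : ℝ × ℝ → ℝ) : ℝ := ∫ p in Qset, f p * u p

/-- The functional `I_β`. -/
def Ibeta (s : ℝ) (f : ℝ × ℝ → ℝ) (β : ℝ) (u : ℝ × ℝ → ℝ) : ℝ :=
  (1 / 2) * (normPlusSq u - normMinusSq u - β * vtNormSq u)
    - (1 / (s + 1)) * intPow (s + 1) u - intFU f u

/-- `𝓘_β(u) = 2a₆(I_β(u)² + 1)`. -/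
def calI (s : ℝ) (f : ℝ × ℝ → ℝ) (a6 β : ℝ) (u : ℝ × ℝ → ℝ) : ℝ :=
  2 * a6 * ((Ibeta s f β u) ^ 2 + 1)

/-- The cutoff `ψ(u) = χ(𝓘_β(u)⁻¹·(1/(s+1))∫_Q|u|^{s+1})`. -/
def psiCut (s : ℝ) (f : ℝ × ℝ → ℝ) (a6 : ℝ) (χ : ℝ → ℝ) (β : ℝ) (u : ℝ × ℝ → ℝ) : ℝ :=
  χ ((calI s f a6 β u)⁻¹ * ((1 / (s + 1)) * intPow (s + 1) u))

/-- The truncated functional `J_β`. -/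
def Jbeta (s : ℝ) (f : ℝ × ℝ → ℝ) (a6 : ℝ) (χ : ℝ → ℝ) (β : ℝ) (u : ℝ × ℝ → ℝ) : ℝ :=
  (1 / 2) * (normPlusSq u - normMinusSq u - β * vtNormSq u)
    - (1 / (s + 1)) * intPow (s + 1) u - psiCut s f a6 χ β u * intFU f u

/-- Indices `(j, k, A/B)` of the eigenfunctions with positive eigenvalue: `1 ≤ j < k`. -/
def IdxSet : Set (ℕ × ℕ × Bool) := {i | 1 ≤ i.1 ∧ i.1 < i.2.1}

/-- The eigenfunction corresponding to an index. -/
def idxFun (i : ℕ × ℕ × Bool) : ℝ × ℝ → ℝ := if i.2.2 then phiA i.1 i.2.1 else phiB i.1 i.2.1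

/-- The eigenvalue `k² - j²` of an index. -/
def eigenval (i : ℕ × ℕ × Bool) : ℝ := (i.2.1 : ℝ) ^ 2 - (i.1 : ℝ) ^ 2

/-- `e` (0-indexed: `e_{l+1} = idxFun (e l)`) enumerates the positive-eigenvalue
eigenfunctions in nondecreasing order of `k² - j²`. -/
def IsEnum (e : ℕ → ℕ × ℕ × Bool) : Prop :=
  Function.Injective e ∧ Set.range e = IdxSet ∧
    ∀ l l' : ℕ, l ≤ l' → eigenval (e l) ≤ eigenval (e l')

/-- `E^{+n} = span{e₁, …, e_n}`. -/
def Eplus (e : ℕ → ℕ × ℕ × Bool) (n : ℕ) : Submodule ℝ (ℝ × ℝ → ℝ) :=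
  Submodule.span ℝ (idxFun '' (e '' {l | l < n}))

/-- `E^{-m} = span{sin(jx)cos(kt), sin(jx)sin(kt) : j + k ≤ m, 0 ≤ k < j}`. -/
def Eminus (m : ℕ) : Submodule ℝ (ℝ × ℝ → ℝ) :=
  Submodule.span ℝ {g | ∃ j k : ℕ, j + k ≤ m ∧ k < j ∧ (g = phiA j k ∨ g = phiB j k)}

/-- `N^m = span{sin(jx)cos(jt), sin(jx)sin(jt) : 1 ≤ j ≤ m}`. -/
def Nspace (m : ℕ) : Submodule ℝ (ℝ × ℝ → ℝ) :=
  Submodule.span ℝ {g | ∃ j : ℕ, 1 ≤ j ∧ j ≤ m ∧ (g = phiA j j ∨ g = phiB j j)}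

/-- `E^{+n} ⊕ E^{-m} ⊕ N^m`. -/
def Wnm (e : ℕ → ℕ × ℕ × Bool) (n m : ℕ) : Submodule ℝ (ℝ × ℝ → ℝ) :=
  Eplus e n ⊔ Eminus m ⊔ Nspace m

/-- `f` is `C²`, `2π`-periodic in `t`, and vanishes at `x = 0` and `x = π`. -/
def fAdmissible (f : ℝ × ℝ → ℝ) : Prop :=
  ContDiff ℝ 2 f ∧ (∀ x t : ℝ, f (x, t + 2 * Real.pi) = f (x, t)) ∧
    ∀ t : ℝ, f (0, t) = 0 ∧ f (Real.pi, t) = 0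

/-- The cutoff function `χ`: smooth, `χ = 1` on `(-∞,1]`, `χ = 0` on `[2,∞)`,
and `-2 < χ' < 0` on `(1,2)`. -/
def chiAdmissible (χ : ℝ → ℝ) : Prop :=
  ContDiff ℝ (⊤ : ℕ∞) χ ∧ (∀ t : ℝ, t ≤ 1 → χ t = 1) ∧ (∀ t : ℝ, 2 ≤ t → χ t = 0) ∧
    ∀ t : ℝ, 1 < t → t < 2 → -2 < deriv χ t ∧ deriv χ t < 0

/-! On `E^{+n}` the quadratic part of `J_β` is controlled by the `L²` norm: the modes
`sin(jx)cos(kt)`, `sin(jx)sin(kt)` are orthogonal on `Q` with squared norm `π²/2`, so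
`‖w⁺‖_E² ≤ 2λ‖u‖²_{L²}` where `λ = k² - j²` is the eigenvalue of `e_n`. Young's inequality gives
`M t² - M^{(s+1)/(s-1)} ≤ |t|^{s+1}`; with `M = (s+1)(λ+1)` the term `(1/(s+1))∫|u|^{s+1}`
absorbs both `λ‖u‖²_{L²}` and the `½‖u‖²_{L²}` from `|ψ ∫ f u| ≤ ½‖f‖²_{L²} + ½‖u‖²_{L²}`
(`0 ≤ χ ≤ 1`). What remains is a constant depending on `λ`, `s` and `f` only. -/

open Real

lemma integral_cos_int_mul_natCast_mul_pi (z : ℤ) (N : ℕ) :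
    ∫ x in (0 : ℝ)..N * π, cos (z * x) = if z = 0 then N * π else 0 := by
  split_ifs with hz
  · simp [hz]
  · have hz' : (z : ℝ) ≠ 0 := Int.cast_ne_zero.mpr hz
    rw [intervalIntegral.integral_comp_mul_left (fun x => cos x) hz', integral_cos,
      show (z : ℝ) * (N * π) = ((z * N : ℤ) : ℝ) * π by push_cast; ring, sin_int_mul_pi]
    simp

lemma integral_sin_int_mul_two_pi (z : ℤ) : ∫ x in (0 : ℝ)..2 * π, sin (z * x) = 0 := by
  rcases eq_or_ne z 0 with rfl | hz
  · simp
  · have hz' : (z : ℝ) ≠ 0 := Int.cast_ne_zero.mpr hz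
    rw [intervalIntegral.integral_comp_mul_left (fun x => sin x) hz', integral_sin,
      cos_int_mul_two_pi]
    simp

lemma intervalIntegrable_cos_mul (c a b : ℝ) :
    IntervalIntegrable (fun x => cos (c * x)) MeasureTheory.volume a b :=
  (continuous_cos.comp (continuous_const.mul continuous_id)).intervalIntegrable a b

lemma intervalIntegrable_sin_mul (c a b : ℝ) :
    IntervalIntegrable (fun x => sin (c * x)) MeasureTheory.volume a b :=
  (continuous_sin.comp (continuous_const.mul continuous_id)).intervalIntegrable a b

lemma integral_sin_nat_mul_mul_sin_nat_mul {j : ℕ} (hj : j ≠ 0) (j' N : ℕ) :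
    ∫ x in (0 : ℝ)..N * π, sin (j * x) * sin (j' * x) = if j = j' then N * π / 2 else 0 := by
  have hprod : ∀ x : ℝ, sin (j * x) * sin (j' * x)
      = (cos (((j - j' : ℤ) : ℝ) * x) - cos (((j + j' : ℤ) : ℝ) * x)) / 2 := by
    intro x; push_cast; rw [sub_mul, add_mul, cos_sub, cos_add]; ring
  simp_rw [hprod]
  rw [intervalIntegral.integral_div, intervalIntegral.integral_sub (intervalIntegrable_cos_mul ..)
    (intervalIntegrable_cos_mul ..), integral_cos_int_mul_natCast_mul_pi,
    integral_cos_int_mul_natCast_mul_pi]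
  split_ifs <;> first | (exfalso; omega) | ring

lemma integral_cos_nat_mul_mul_cos_nat_mul {j : ℕ} (hj : j ≠ 0) (j' N : ℕ) :
    ∫ x in (0 : ℝ)..N * π, cos (j * x) * cos (j' * x) = if j = j' then N * π / 2 else 0 := by
  have hprod : ∀ x : ℝ, cos (j * x) * cos (j' * x)
      = (cos (((j - j' : ℤ) : ℝ) * x) + cos (((j + j' : ℤ) : ℝ) * x)) / 2 := by
    intro x; push_cast; rw [sub_mul, add_mul, cos_sub, cos_add]; ring
  simp_rw [hprod]
  rw [intervalIntegral.integral_div, intervalIntegral.integral_add (intervalIntegrable_cos_mul ..)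
    (intervalIntegrable_cos_mul ..), integral_cos_int_mul_natCast_mul_pi,
    integral_cos_int_mul_natCast_mul_pi]
  split_ifs <;> first | (exfalso; omega) | ring

lemma integral_sin_nat_mul_mul_cos_nat_mul_two_pi (k k' : ℕ) :
    ∫ x in (0 : ℝ)..2 * π, sin (k * x) * cos (k' * x) = 0 := by
  have hprod : ∀ x : ℝ, sin (k * x) * cos (k' * x)
      = (sin (((k + k' : ℤ) : ℝ) * x) + sin (((k - k' : ℤ) : ℝ) * x)) / 2 := by
    intro x; push_cast; rw [sub_mul, add_mul, sin_sub, sin_add]; ring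
  simp_rw [hprod]
  rw [intervalIntegral.integral_div, intervalIntegral.integral_add (intervalIntegrable_sin_mul ..)
    (intervalIntegrable_sin_mul ..), integral_sin_int_mul_two_pi, integral_sin_int_mul_two_pi]
  simp

def timeMode (k : ℕ) (b : Bool) (t : ℝ) : ℝ := if b then cos (k * t) else sin (k * t)

lemma integral_timeMode_mul_timeMode {k : ℕ} (hk : k ≠ 0) (b : Bool) (k' : ℕ) (b' : Bool) :
    ∫ t in (0 : ℝ)..2 * π, timeMode k b t * timeMode k' b' t
      = if k = k' ∧ b = b' then π else 0 := by
  have hss := integral_sin_nat_mul_mul_sin_nat_mul hk k' 2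
  have hcc := integral_cos_nat_mul_mul_cos_nat_mul hk k' 2
  have hsc := integral_sin_nat_mul_mul_cos_nat_mul_two_pi
  push_cast at hss hcc
  cases b <;> cases b' <;> simp only [timeMode, Bool.false_eq_true, ↓reduceIte, and_true,
    reduceCtorEq, and_false, hss, hcc, hsc, mul_comm (cos _) (sin _)] <;> split_ifs <;> ring

lemma setIntegral_Qset_mul (g h : ℝ → ℝ) :
    ∫ p in Qset, g p.1 * h p.2 = (∫ x in (0 : ℝ)..π, g x) * ∫ t in (0 : ℝ)..2 * π, h t := by
  rw [intervalIntegral.integral_of_le pi_pos.le, intervalIntegral.integral_of_le (by positivity),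
    integral_Ioc_eq_integral_Ioo, integral_Ioc_eq_integral_Ioo, Qset,
    Measure.volume_eq_prod, setIntegral_prod_mul]

lemma volume_Qset : volume.real Qset = 2 * π ^ 2 := by
  rw [measureReal_def, Qset, Measure.volume_eq_prod, Measure.prod_prod, Real.volume_Ioo,
    Real.volume_Ioo, ENNReal.toReal_mul, ENNReal.toReal_ofReal (by linarith [pi_pos]),
    ENNReal.toReal_ofReal (by linarith [pi_pos])]
  ring

lemma Continuous.integrableOn_Qset {g : ℝ × ℝ → ℝ} (hg : Continuous g) : IntegrableOn g Qset :=
  (hg.continuousOn.integrableOn_compact (isCompact_Icc.prod isCompact_Icc)).mono_set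
    (Set.prod_mono Set.Ioo_subset_Icc_self Set.Ioo_subset_Icc_self)

lemma idxFun_apply (i : ℕ × ℕ × Bool) (p : ℝ × ℝ) :
    idxFun i p = sin (i.1 * p.1) * timeMode i.2.1 i.2.2 p.2 := by
  obtain ⟨j, k, _ | _⟩ := i <;> rfl

lemma continuous_idxFun (i : ℕ × ℕ × Bool) : Continuous (idxFun i) := by
  unfold idxFun phiA phiB
  split_ifs <;> fun_prop

lemma setIntegral_idxFun_mul_idxFun {i : ℕ × ℕ × Bool} (hi : i ∈ IdxSet) (i' : ℕ × ℕ × Bool) :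
    ∫ p in Qset, idxFun i p * idxFun i' p = if i = i' then π ^ 2 / 2 else 0 := by
  obtain ⟨j, k, b⟩ := i
  obtain ⟨j', k', b'⟩ := i'
  obtain ⟨hj, hjk⟩ : 1 ≤ j ∧ j < k := hi
  simp_rw [idxFun_apply]
  rw [show (fun p : ℝ × ℝ => sin (j * p.1) * timeMode k b p.2 * (sin (j' * p.1) * timeMode k' b' p.2))
      = fun p => (sin (j * p.1) * sin (j' * p.1)) * (timeMode k b p.2 * timeMode k' b' p.2) by
    ext p; ring,
    setIntegral_Qset_mul (fun x => sin (j * x) * sin (j' * x))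
      (fun t => timeMode k b t * timeMode k' b' t),
    integral_timeMode_mul_timeMode (by omega)]
  have hspace := integral_sin_nat_mul_mul_sin_nat_mul (by omega : j ≠ 0) j' 1
  rw [Nat.cast_one, one_mul] at hspace
  rw [hspace]
  simp only [Prod.mk.injEq]
  split_ifs <;> first | (exfalso; tauto) | ring

lemma linearCombination_idxFun_apply (l : ℕ × ℕ × Bool →₀ ℝ) (p : ℝ × ℝ) :
    Finsupp.linearCombination ℝ idxFun l p = ∑ i ∈ l.support, l i * idxFun i p := by
  simp [Finsupp.linearCombination_apply, Finsupp.sum, Finset.sum_apply]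

lemma continuous_linearCombination_idxFun (l : ℕ × ℕ × Bool →₀ ℝ) :
    Continuous (Finsupp.linearCombination ℝ idxFun l) := by
  simp_rw [funext (linearCombination_idxFun_apply l)]
  exact continuous_finsetSum _ fun i _ => continuous_const.mul (continuous_idxFun i)

lemma tsum_add_bool_eq_sum {α β : Type*} {g : α × β × Bool → ℝ} {T : Finset (α × β × Bool)}
    (hg : ∀ i ∉ T, g i = 0) :
    ∑' ab : α × β, (g (ab.1, ab.2, true) + g (ab.1, ab.2, false)) = ∑ i ∈ T, g i := by
  have hsum : Summable fun p => g (Equiv.prodAssoc α β Bool p) :=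
    (Equiv.summable_iff _).mpr (summable_of_ne_finset_zero hg)
  have htsum : ∑' i, g i = ∑ i ∈ T, g i := tsum_eq_sum hg
  rw [← htsum, ← Equiv.tsum_eq (Equiv.prodAssoc α β Bool),
    hsum.tsum_prod' fun _ => .of_finite]
  simp [tsum_fintype]

section linearCombination

variable {l : ℕ × ℕ × Bool →₀ ℝ} (hl : ↑l.support ⊆ IdxSet)
include hl

lemma setIntegral_linearCombination_idxFun_mul (i' : ℕ × ℕ × Bool) :
    ∫ p in Qset, Finsupp.linearCombination ℝ idxFun l p * idxFun i' p = π ^ 2 / 2 * l i' := by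
  simp_rw [linearCombination_idxFun_apply, Finset.sum_mul, mul_assoc]
  rw [integral_finsetSum _ fun i _ => Continuous.integrableOn_Qset
    (by have := continuous_idxFun i; have := continuous_idxFun i'; fun_prop)]
  simp_rw [integral_const_mul]
  rw [Finset.sum_congr rfl fun i hi => by rw [setIntegral_idxFun_mul_idxFun (hl hi)]]
  simp only [mul_ite, mul_zero, Finset.sum_ite_eq', Finsupp.mem_support_iff]
  split_ifs with h
  · ring
  · simp [not_not.mp h]

lemma coefA_linearCombination_idxFun (j k : ℕ) :
    coefA j k (Finsupp.linearCombination ℝ idxFun l) = l (j, k, true) := by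
  rw [coefA, ← show idxFun (j, k, true) = phiA j k from rfl,
    setIntegral_linearCombination_idxFun_mul hl]
  split_ifs with hk
  · have : (j, k, true) ∉ l.support := fun h => by have := (hl h).2; simp_all
    rw [Finsupp.notMem_support_iff.mp this]
    ring
  · field_simp

lemma coefB_linearCombination_idxFun (j k : ℕ) :
    coefB j k (Finsupp.linearCombination ℝ idxFun l) = l (j, k, false) := by
  rw [coefB, ← show idxFun (j, k, false) = phiB j k from rfl,
    setIntegral_linearCombination_idxFun_mul hl]
  field_simp

lemma setIntegral_linearCombination_idxFun_sq :
    ∫ p in Qset, Finsupp.linearCombination ℝ idxFun l p ^ 2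
      = π ^ 2 / 2 * ∑ i ∈ l.support, l i ^ 2 := by
  have hu : ∀ p, Finsupp.linearCombination ℝ idxFun l p ^ 2
      = ∑ i ∈ l.support, l i * (Finsupp.linearCombination ℝ idxFun l p * idxFun i p) := by
    intro p
    rw [sq]; nth_rewrite 2 [linearCombination_idxFun_apply]
    rw [Finset.mul_sum]
    exact Finset.sum_congr rfl fun i _ => by ring
  simp_rw [hu]
  rw [integral_finsetSum _ fun i _ => Continuous.integrableOn_Qset (by
    have := continuous_idxFun i; have := continuous_linearCombination_idxFun l; fun_prop)]
  simp_rw [integral_const_mul, setIntegral_linearCombination_idxFun_mul hl, Finset.mul_sum]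
  exact Finset.sum_congr rfl fun i _ => by ring

lemma normPlusSq_linearCombination_idxFun :
    normPlusSq (Finsupp.linearCombination ℝ idxFun l)
      = π ^ 2 * ∑ i ∈ l.support, eigenval i * l i ^ 2 := by
  rw [normPlusSq, ← tsum_add_bool_eq_sum (g := fun i => eigenval i * l i ^ 2)
    fun i hi => by simp [Finsupp.notMem_support_iff.mp hi]]
  congr 1
  refine tsum_congr fun ⟨j, k⟩ => ?_
  simp only [coefA_linearCombination_idxFun hl, coefB_linearCombination_idxFun hl, eigenval]
  split_ifs with hjk
  · rw [abs_of_nonneg (sub_nonneg.mpr (by gcongr))]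
    ring
  · have hzero : ∀ b, l (j, k, b) = 0 := fun b =>
      Finsupp.notMem_support_iff.mp fun h => hjk (hl h).2
    simp [hzero]

lemma normPlusSq_linearCombination_idxFun_le {Λ : ℝ} (hΛ : ∀ i ∈ l.support, eigenval i ≤ Λ) :
    normPlusSq (Finsupp.linearCombination ℝ idxFun l)
      ≤ 2 * Λ * ∫ p in Qset, Finsupp.linearCombination ℝ idxFun l p ^ 2 := by
  rw [normPlusSq_linearCombination_idxFun hl, setIntegral_linearCombination_idxFun_sq hl,
    Finset.mul_sum, Finset.mul_sum, Finset.mul_sum]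
  refine Finset.sum_le_sum fun i hi => ?_
  nlinarith [mul_le_mul_of_nonneg_left (mul_le_mul_of_nonneg_right (hΛ i hi) (sq_nonneg (l i)))
    (sq_nonneg π)]

end linearCombination

lemma mul_sq_sub_rpow_le_abs_rpow {s M : ℝ} (hs : 1 < s) (hM : 0 ≤ M) (t : ℝ) :
    M * t ^ 2 - M ^ ((s + 1) / (s - 1)) ≤ |t| ^ (s + 1) := by
  have hpq : ((s + 1) / 2).HolderConjugate ((s + 1) / (s - 1)) :=
    holderConjugate_iff.mpr ⟨by linarith, by field_simp; ring⟩
  have hyoung := young_inequality_of_nonneg (sq_nonneg t) hM hpq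
  have hpow : (t ^ 2) ^ ((s + 1) / 2) = |t| ^ (s + 1) := by
    rw [← sq_abs, ← rpow_natCast, ← rpow_mul (abs_nonneg t)]
    ring_nf
  rw [hpow] at hyoung
  have h1 : |t| ^ (s + 1) / ((s + 1) / 2) ≤ |t| ^ (s + 1) :=
    div_le_self (by positivity) (by linarith)
  have h2 : M ^ ((s + 1) / (s - 1)) / ((s + 1) / (s - 1)) ≤ M ^ ((s + 1) / (s - 1)) :=
    div_le_self (by positivity) ((one_le_div (by linarith)).mpr (by linarith))
  linarith

lemma mul_setIntegral_sq_sub_le_intPow {s M : ℝ} (hs : 1 < s) (hM : 0 ≤ M) {u : ℝ × ℝ → ℝ}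
    (hu : Continuous u) :
    M * (∫ p in Qset, u p ^ 2) - 2 * π ^ 2 * M ^ ((s + 1) / (s - 1)) ≤ intPow (s + 1) u := by
  have hsq : IntegrableOn (fun p => M * u p ^ 2) Qset := Continuous.integrableOn_Qset (by fun_prop)
  have hconst : IntegrableOn (fun _ => M ^ ((s + 1) / (s - 1))) Qset :=
    continuous_const.integrableOn_Qset
  have hrpow : IntegrableOn (fun p => |u p| ^ (s + 1)) Qset :=
    (hu.abs.rpow_const fun _ => Or.inr (by linarith)).integrableOn_Qset
  calc M * (∫ p in Qset, u p ^ 2) - 2 * π ^ 2 * M ^ ((s + 1) / (s - 1))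
      = ∫ p in Qset, (M * u p ^ 2 - M ^ ((s + 1) / (s - 1))) := by
        rw [integral_sub hsq hconst, integral_const_mul, setIntegral_const, volume_Qset,
          smul_eq_mul]
    _ ≤ intPow (s + 1) u :=
        setIntegral_mono (hsq.sub hconst) hrpow fun p => mul_sq_sub_rpow_le_abs_rpow hs hM (u p)

lemma abs_integral_mul_le_integral_sq_add {α : Type*} [MeasurableSpace α] {μ : Measure α}
    {f g : α → ℝ} (hf : Integrable (fun x => f x ^ 2) μ) (hg : Integrable (fun x => g x ^ 2) μ)
    (hfg : Integrable (fun x => f x * g x) μ) :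
    |∫ x, f x * g x ∂μ| ≤ (∫ x, f x ^ 2 ∂μ) / 2 + (∫ x, g x ^ 2 ∂μ) / 2 := by
  calc |∫ x, f x * g x ∂μ| ≤ ∫ x, |f x * g x| ∂μ := abs_integral_le_integral_abs
    _ ≤ ∫ x, (f x ^ 2 / 2 + g x ^ 2 / 2) ∂μ :=
        integral_mono hfg.abs ((hf.div_const 2).add (hg.div_const 2)) fun x => by
          rw [abs_mul]
          nlinarith [sq_nonneg (|f x| - |g x|), sq_abs (f x), sq_abs (g x)]
    _ = (∫ x, f x ^ 2 ∂μ) / 2 + (∫ x, g x ^ 2 ∂μ) / 2 := by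
        rw [integral_add (hf.div_const 2) (hg.div_const 2), integral_div, integral_div]

lemma chiAdmissible.mem_Icc {χ : ℝ → ℝ} (hχ : chiAdmissible χ) (t : ℝ) : χ t ∈ Set.Icc 0 1 := by
  obtain ⟨hsmooth, hone, hzero, hderiv⟩ := hχ
  rcases le_or_gt t 1 with h1 | h1
  · simp [hone t h1]
  rcases le_or_gt 2 t with h2 | h2
  · simp [hzero t h2]
  have hanti : AntitoneOn χ (Set.Icc 1 2) :=
    antitoneOn_of_deriv_nonpos (convex_Icc 1 2) hsmooth.continuous.continuousOn
      (hsmooth.differentiable (by simp)).differentiableOn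
      fun x hx => by
        rw [interior_Icc] at hx
        exact (hderiv x hx.1 hx.2).2.le
  constructor
  · simpa [hzero 2 le_rfl] using hanti ⟨h1.le, h2.le⟩ (by simp) h2.le
  · simpa [hone 1 le_rfl] using hanti (by simp) ⟨h1.le, h2.le⟩ h1.le

lemma normMinusSq_nonneg (u : ℝ × ℝ → ℝ) : 0 ≤ normMinusSq u :=
  mul_nonneg (by positivity) (tsum_nonneg fun _ => by split_ifs <;> positivity)

lemma vtNormSq_nonneg (u : ℝ × ℝ → ℝ) : 0 ≤ vtNormSq u :=
  mul_nonneg (by positivity) (tsum_nonneg fun _ => by positivity)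

lemma Jbeta_le {s a6 β : ℝ} {f : ℝ × ℝ → ℝ} {χ : ℝ → ℝ} (hχ : ∀ t, χ t ∈ Set.Icc 0 1)
    (hβ : 0 ≤ β) (u : ℝ × ℝ → ℝ) :
    Jbeta s f a6 χ β u ≤ normPlusSq u / 2 - intPow (s + 1) u / (s + 1) + |intFU f u| := by
  have hψ : psiCut s f a6 χ β u ∈ Set.Icc 0 1 := hχ _
  have hcut : -(psiCut s f a6 χ β u * intFU f u) ≤ |intFU f u| := by
    calc -(psiCut s f a6 χ β u * intFU f u) ≤ |psiCut s f a6 χ β u * intFU f u| := neg_le_abs _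
      _ ≤ |intFU f u| := by
        rw [abs_mul]
        exact mul_le_of_le_one_left (abs_nonneg _) (abs_le.mpr ⟨by linarith [hψ.1], hψ.2⟩)
  have := normMinusSq_nonneg u
  have := mul_nonneg hβ (vtNormSq_nonneg u)
  rw [Jbeta]
  linarith [div_eq_mul_one_div (intPow (s + 1) u) (s + 1)]

lemma eigenval_pos {i : ℕ × ℕ × Bool} (hi : i ∈ IdxSet) : 0 < eigenval i := by
  have hjk : (i.1 : ℝ) < i.2.1 := by exact_mod_cast hi.2
  rw [eigenval, sub_pos]
  exact pow_lt_pow_left₀ hjk (Nat.cast_nonneg _) two_ne_zero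

lemma Jbeta_linearCombination_idxFun_le {s a6 β Λ : ℝ} {f : ℝ × ℝ → ℝ} {χ : ℝ → ℝ}
    (hs : 1 < s) (hf : Continuous f) (hχ : ∀ t, χ t ∈ Set.Icc 0 1) (hβ : 0 ≤ β) (hΛ : 0 ≤ Λ)
    {l : ℕ × ℕ × Bool →₀ ℝ} (hl : ↑l.support ⊆ IdxSet) (hlΛ : ∀ i ∈ l.support, eigenval i ≤ Λ) :
    Jbeta s f a6 χ β (Finsupp.linearCombination ℝ idxFun l)
      ≤ 2 * π ^ 2 * ((s + 1) * (Λ + 1)) ^ ((s + 1) / (s - 1)) / (s + 1)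
        + (∫ p in Qset, f p ^ 2) / 2 := by
  set u := Finsupp.linearCombination ℝ idxFun l
  set L2 := ∫ p in Qset, u p ^ 2
  set K := ((s + 1) * (Λ + 1)) ^ ((s + 1) / (s - 1))
  have hu : Continuous u := continuous_linearCombination_idxFun l
  have hL2 : 0 ≤ L2 := integral_nonneg fun p => sq_nonneg _
  have hplus : normPlusSq u ≤ 2 * Λ * L2 := normPlusSq_linearCombination_idxFun_le hl hlΛ
  have hpow : (Λ + 1) * L2 - 2 * π ^ 2 * K / (s + 1) ≤ intPow (s + 1) u / (s + 1) :=
    calc (Λ + 1) * L2 - 2 * π ^ 2 * K / (s + 1)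
        = ((s + 1) * (Λ + 1) * L2 - 2 * π ^ 2 * K) / (s + 1) := by field_simp
      _ ≤ intPow (s + 1) u / (s + 1) := by
        gcongr
        exact mul_setIntegral_sq_sub_le_intPow hs (by positivity) hu
  have hfu : |intFU f u| ≤ (∫ p in Qset, f p ^ 2) / 2 + L2 / 2 :=
    abs_integral_mul_le_integral_sq_add (Continuous.integrableOn_Qset (by fun_prop))
      (Continuous.integrableOn_Qset (by fun_prop)) (hf.mul hu).integrableOn_Qset
  linarith [Jbeta_le (s := s) (f := f) (a6 := a6) hχ hβ u]

theorem statement11_general (s : ℝ) (hs : 1 < s) (f : ℝ × ℝ → ℝ) (hf : fAdmissible f)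
    (e : ℕ → ℕ × ℕ × Bool) (he : IsEnum e) (a6 : ℝ)
    (χ : ℝ → ℝ) (hχ : chiAdmissible χ) :
    ∀ n : ℕ, 1 ≤ n → ∃ C : ℝ, 0 < C ∧ ∀ β ∈ Set.Ioc (0 : ℝ) 1, ∀ m : ℕ, n ≤ m →
      ∀ u ∈ Eplus e n, Jbeta s f a6 χ β u ≤ C := by
  intro n _
  obtain ⟨-, he_range, he_mono⟩ := he
  set Λ := eigenval (e (n - 1))
  have hΛ : 0 < Λ := eigenval_pos (he_range ▸ Set.mem_range_self _)
  refine ⟨2 * π ^ 2 * ((s + 1) * (Λ + 1)) ^ ((s + 1) / (s - 1)) / (s + 1)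
    + (∫ p in Qset, f p ^ 2) / 2, ?_, fun β hβ m _ u hu => ?_⟩
  · have : 0 ≤ ∫ p in Qset, f p ^ 2 := integral_nonneg fun p => sq_nonneg _
    have : 0 < ((s + 1) * (Λ + 1)) ^ ((s + 1) / (s - 1)) := rpow_pos_of_pos (by positivity) _
    positivity
  rw [Eplus, Finsupp.mem_span_image_iff_linearCombination] at hu
  obtain ⟨l, hl, rfl⟩ := hu
  have hle : ∀ i ∈ l.support, i ∈ IdxSet ∧ eigenval i ≤ Λ := by
    intro i hi
    obtain ⟨k, hk, rfl⟩ := (Finsupp.mem_supported ℝ l).mp hl hi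
    exact ⟨he_range ▸ Set.mem_range_self k, he_mono k (n - 1) (by simp at hk; omega)⟩
  exact Jbeta_linearCombination_idxFun_le hs hf.1.continuous hχ.mem_Icc hβ.1.le hΛ.le
    (fun i hi => (hle i hi).1) fun i hi => (hle i hi).2

/-- `J_β` is bounded above on `E^{+n}` by a constant `C(n)` independent
of `β ∈ (0,1]` and `m`. -/
theorem statement11 (s : ℝ) (hs : 1 < s) (f : ℝ × ℝ → ℝ) (hf : fAdmissible f)
    (e : ℕ → ℕ × ℕ × Bool) (he : IsEnum e) (a6 : ℝ) (ha6 : 0 < a6)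
    (χ : ℝ → ℝ) (hχ : chiAdmissible χ) :
    ∀ n : ℕ, 1 ≤ n → ∃ C : ℝ, 0 < C ∧ ∀ β ∈ Set.Ioc (0 : ℝ) 1, ∀ m : ℕ, n ≤ m →
      ∀ u ∈ Eplus e n, Jbeta s f a6 χ β u ≤ C :=
  statement11_general s hs f hf e he a6 χ hχ
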